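/- If each user selects among its M best channels the one with minimum current load (breaking ties arbitrarily), and users arrive sequentially with each user's M best channels being M channels chosen uniformly at random without replacement from K channels, then after N = K users arrive, the maximum load is at most ln ln K / ln M + O(1) with probability 1 − o(1) as K → ∞. -/

import Mathlib

open Filter

/-- The bin of minimum current load among a nonempty set of candidate bins
(ties broken by `Classical.choose`). -/
noncomputable def nextBin {K : ℕ} (loads : Fin K → ℕ) (s : Finset (Fin K))
    (hs : s.Nonempty) : Fin K :=
  Classical.choose (s.exists_min_image loads hs)

/-- Sequential greedy placement: ball `n` is placed into the least loaded bin among its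
candidate set `c n` (a set of `M ≥ 1` bins); `loadsProc hM c n` gives the bin loads after
the first `n` balls have been placed. -/
noncomputable def loadsProc {K M : ℕ} (hM : 0 < M)
    (c : ℕ → {s : Finset (Fin K) // s.card = M}) : ℕ → Fin K → ℕ
  | 0 => fun _ => 0
  | n + 1 => fun k =>
      loadsProc hM c n k +
        if k = nextBin (loadsProc hM c n) (c n).1
            (Finset.card_pos.mp (by rw [(c n).2]; exact hM)) then 1 else 0

namespace ABKU

variable {K M : ℕ}

section Det
variable (hM : 0 < M) (c : ℕ → {s : Finset (Fin K) // s.card = M})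

noncomputable def tgt (n : ℕ) : Fin K :=
  nextBin (loadsProc hM c n) (c n).1 (Finset.card_pos.mp (by rw [(c n).2]; exact hM))

lemma loadsProc_succ (n : ℕ) (k : Fin K) :
    loadsProc hM c (n+1) k = loadsProc hM c n k + if k = tgt hM c n then 1 else 0 := rfl

lemma tgt_spec (n : ℕ) : tgt hM c n ∈ (c n).1 ∧
    ∀ j ∈ (c n).1, loadsProc hM c n (tgt hM c n) ≤ loadsProc hM c n j := by
  have h := Classical.choose_spec (((c n).1).exists_min_image (loadsProc hM c n)
    (Finset.card_pos.mp (by rw [(c n).2]; exact hM)))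
  exact ⟨h.1, h.2⟩

lemma loadsProc_le_succ (n : ℕ) (k : Fin K) :
    loadsProc hM c n k ≤ loadsProc hM c (n+1) k := by
  rw [loadsProc_succ]; omega

lemma loadsProc_mono {m n : ℕ} (h : m ≤ n) (k : Fin K) :
    loadsProc hM c m k ≤ loadsProc hM c n k := by
  induction n, h using Nat.le_induction with
  | base => exact le_refl _
  | succ n hmn ih => exact le_trans ih (loadsProc_le_succ hM c n k)

lemma loadsProc_sum (n : ℕ) : ∑ k, loadsProc hM c n k = n := by
  induction n with
  | zero => simp [loadsProc]
  | succ n ih =>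
    have : ∀ k, loadsProc hM c (n+1) k
        = loadsProc hM c n k + if k = tgt hM c n then 1 else 0 :=
      loadsProc_succ hM c n
    simp only [this, Finset.sum_add_distrib, ih, Finset.sum_ite_eq',
      Finset.mem_univ, if_true]

lemma nextBin_congr (l : Fin K → ℕ) {s t : Finset (Fin K)} (h : s = t)
    (hs : s.Nonempty) (ht : t.Nonempty) : nextBin l s hs = nextBin l t ht := by
  subst h; rfl

lemma loadsProc_congr {c d : ℕ → {s : Finset (Fin K) // s.card = M}} (n : ℕ)
    (h : ∀ m < n, c m = d m) : loadsProc hM c n = loadsProc hM d n := by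
  induction n with
  | zero => rfl
  | succ n ih =>
    have hrec : loadsProc hM c n = loadsProc hM d n := ih (fun m hm => h m (by omega))
    have hcd : c n = d n := h n (by omega)
    funext k
    rw [loadsProc_succ, loadsProc_succ, hrec]
    have : tgt hM c n = tgt hM d n := by
      unfold tgt
      rw [hrec]
      exact nextBin_congr _ (congrArg Subtype.val hcd) _ _
    rw [this]

/-- `Sset i n` : bins whose load after `n` balls is at least `i`. -/
noncomputable def Sset (i n : ℕ) : Finset (Fin K) :=
  Finset.univ.filter (fun k => i ≤ loadsProc hM c n k)

lemma mem_Sset {i n : ℕ} {k : Fin K} :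
    k ∈ Sset hM c i n ↔ i ≤ loadsProc hM c n k := by simp [Sset]

lemma Sset_mono_n {i m n : ℕ} (h : m ≤ n) : Sset hM c i m ⊆ Sset hM c i n := by
  intro k hk
  rw [mem_Sset] at *
  exact le_trans hk (loadsProc_mono hM c h k)

lemma Sset_base_card (hK : 0 < K) {i : ℕ} (hi : 0 < i) :
    (Sset hM c i K).card * i ≤ K := by
  calc (Sset hM c i K).card * i = ∑ _k ∈ Sset hM c i K, i := by
        rw [Finset.sum_const, smul_eq_mul, mul_comm]
      _ ≤ ∑ k ∈ Sset hM c i K, loadsProc hM c K k :=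
        Finset.sum_le_sum (fun k hk => (mem_Sset hM c).mp hk)
      _ ≤ ∑ k, loadsProc hM c K k :=
        Finset.sum_le_sum_of_subset (Finset.subset_univ _)
      _ = K := loadsProc_sum hM c K

/-- Key deterministic step: every bin that ends with load `≥ i+1` is hit at some step `n < K`
at which all its candidates already have load `≥ i`. -/
lemma card_Sset_le (i : ℕ) :
    (Sset hM c (i+1) K).card ≤
      ((Finset.range K).filter (fun n => (c n).1 ⊆ Sset hM c i n)).card := by
  classical
  have hK : 0 < K := (tgt hM c 0).pos
  have hPex : ∀ k : Fin K, ∃ n, i + 1 ≤ loadsProc hM c (n+1) k ∨ K ≤ n :=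
    fun k => ⟨K, Or.inr (le_refl K)⟩
  have key : ∀ k, k ∈ Sset hM c (i+1) K →
      Nat.find (hPex k) < K ∧ k = tgt hM c (Nat.find (hPex k)) ∧
      (c (Nat.find (hPex k))).1 ⊆ Sset hM c i (Nat.find (hPex k)) := by
    intro k hk
    rw [mem_Sset] at hk
    set n := Nat.find (hPex k) with hn
    have hnK : n < K := by
      have hfind : Nat.find (hPex k) ≤ K - 1 :=
        Nat.find_le (Or.inl (by rw [(by omega : K - 1 + 1 = K)]; exact hk))
      omega
    have hPn := Nat.find_spec (hPex k)
    have hstep : i + 1 ≤ loadsProc hM c (n+1) k := by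
      rcases hPn with h | h
      · exact h
      · omega
    have hprev : loadsProc hM c n k ≤ i := by
      rcases Nat.eq_zero_or_pos n with h0 | h0
      · rw [h0]
        simp [loadsProc]
      · have hmin := Nat.find_min (hPex k) (m := n - 1) (by omega)
        push_neg at hmin
        rw [(by omega : n - 1 + 1 = n)] at hmin
        omega
    have hhit : k = tgt hM c n := by
      by_contra hne
      rw [loadsProc_succ, if_neg hne] at hstep
      omega
    have hload : i ≤ loadsProc hM c n k := by
      rw [loadsProc_succ, if_pos hhit] at hstep
      omega
    refine ⟨hnK, hhit, ?_⟩
    intro j hj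
    rw [mem_Sset]
    calc i ≤ loadsProc hM c n k := hload
      _ = loadsProc hM c n (tgt hM c n) := by rw [← hhit]
      _ ≤ loadsProc hM c n j := (tgt_spec hM c n).2 j hj
  apply Finset.card_le_card_of_injOn (fun k => Nat.find (hPex k))
  · intro k hk
    obtain ⟨h1, _, h3⟩ := key k hk
    simp only [Finset.mem_coe, Finset.mem_filter, Finset.mem_range]
    exact ⟨h1, h3⟩
  · intro k hk k' hk' heq
    obtain ⟨_, h2, _⟩ := key k hk
    obtain ⟨_, h2', _⟩ := key k' hk'
    simp only at heq
    rw [h2, h2', heq]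

end Det

section Prob

abbrev Om (K M : ℕ) := {s : Finset (Fin K) // s.card = M}

variable (hM : 0 < M) (hK : 0 < K)

/-- Extend a `Fin K`-indexed choice function to `ℕ` (as in the theorem statement). -/
def ext (c : Fin K → Om K M) : ℕ → Om K M := fun n => c ⟨n % K, Nat.mod_lt n hK⟩

lemma ext_lt (c : Fin K → Om K M) (n : Fin K) : ext hK c n.1 = c n := by
  unfold ext
  congr 1
  exact Fin.ext (Nat.mod_eq_of_lt n.2)

/-- Truncated indicator that ball `n`'s candidates all lie in the level-`i` set, which
has size at most `b`. -/
noncomputable def Zi (i b : ℕ) (n : Fin K) (c : Fin K → Om K M) : ℝ :=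
  if ((c n).1 ⊆ Sset hM (ext hK c) i n.1 ∧ (Sset hM (ext hK c) i n.1).card ≤ b)
  then 1 else 0

noncomputable def Ti (i b : ℕ) (c : Fin K → Om K M) : ℝ := ∑ n : Fin K, Zi hM hK i b n c

lemma Zi_nonneg (i b : ℕ) (n : Fin K) (c : Fin K → Om K M) : 0 ≤ Zi hM hK i b n c := by
  unfold Zi; positivity

lemma Zi_le_one (i b : ℕ) (n : Fin K) (c : Fin K → Om K M) : Zi hM hK i b n c ≤ 1 := by
  unfold Zi
  split <;> norm_num

/-- On the event that level `i` has at most `b` bins, the number of bins at level `i+1`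
is at most the number of "bad" balls. -/
lemma card_le_Ti (i b : ℕ) (c : Fin K → Om K M)
    (hE : (Sset hM (ext hK c) i K).card ≤ b) :
    ((Sset hM (ext hK c) (i+1) K).card : ℝ) ≤ Ti hM hK i b c := by
  classical
  have h1 := card_Sset_le hM (ext hK c) i
  have h2 : ∀ n ∈ (Finset.range K).filter (fun n => ((ext hK c) n).1 ⊆ Sset hM (ext hK c) i n),
      (1 : ℝ) ≤ Zi hM hK i b ⟨n % K, Nat.mod_lt n hK⟩ c := by
    intro n hn
    rw [Finset.mem_filter, Finset.mem_range] at hn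
    obtain ⟨hnK, hsub⟩ := hn
    have hmod : n % K = n := Nat.mod_eq_of_lt hnK
    unfold Zi
    rw [if_pos]
    constructor
    · show (c ⟨n % K, Nat.mod_lt n hK⟩).1 ⊆ _
      rw [show ((⟨n % K, Nat.mod_lt n hK⟩ : Fin K) : ℕ) = n from hmod]
      exact hsub
    · rw [show ((⟨n % K, Nat.mod_lt n hK⟩ : Fin K) : ℕ) = n from hmod]
      exact le_trans (Finset.card_le_card (Sset_mono_n hM (ext hK c) (le_of_lt hnK))) hE
  set f : ℕ → ℝ := fun n => Zi hM hK i b ⟨n % K, Nat.mod_lt n hK⟩ c with hf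
  calc ((Sset hM (ext hK c) (i+1) K).card : ℝ)
      ≤ (((Finset.range K).filter
          (fun n => ((ext hK c) n).1 ⊆ Sset hM (ext hK c) i n)).card : ℝ) := by
        exact_mod_cast h1
    _ = ∑ _n ∈ (Finset.range K).filter
          (fun n => ((ext hK c) n).1 ⊆ Sset hM (ext hK c) i n), (1 : ℝ) := by
        rw [Finset.sum_const, nsmul_eq_mul, mul_one]
    _ ≤ ∑ n ∈ (Finset.range K).filter
          (fun n => ((ext hK c) n).1 ⊆ Sset hM (ext hK c) i n), f n :=
        Finset.sum_le_sum h2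
    _ ≤ ∑ n ∈ Finset.range K, f n :=
        Finset.sum_le_sum_of_subset_of_nonneg (Finset.filter_subset _ _)
          (fun n _ _ => Zi_nonneg hM hK i b _ c)
    _ = Ti hM hK i b c := by
        rw [← Fin.sum_univ_eq_sum_range]
        apply Finset.sum_congr rfl
        intro n _
        rw [hf]
        show Zi hM hK i b ⟨n.1 % K, Nat.mod_lt n.1 hK⟩ c = Zi hM hK i b n c
        have hfin : (⟨n.1 % K, Nat.mod_lt n.1 hK⟩ : Fin K) = n :=
          Fin.ext (Nat.mod_eq_of_lt n.2)
        rw [hfin]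


/-! ### Dependence on coordinates -/

lemma Om_nonempty (hMK : M ≤ K) : Nonempty (Om K M) := by
  obtain ⟨t, _, ht⟩ := Finset.exists_subset_card_eq
    (s := (Finset.univ : Finset (Fin K))) (n := M) (by simpa using hMK)
  exact ⟨⟨t, ht⟩⟩

lemma Sset_ext_congr {c d : Fin K → Om K M} (i : ℕ) {n : ℕ} (hn : n ≤ K)
    (h : ∀ m : Fin K, m.1 < n → c m = d m) :
    Sset hM (ext hK c) i n = Sset hM (ext hK d) i n := by
  have hext : ∀ m, m < n → ext hK c m = ext hK d m := by
    intro m hm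
    unfold ext
    exact h _ (lt_of_le_of_lt (Nat.mod_le m K) hm)
  unfold Sset
  rw [loadsProc_congr hM n hext]

lemma Zi_update_lt (i b : ℕ) {m n : Fin K} (hmn : m < n) (c : Fin K → Om K M)
    (ω : Om K M) : Zi hM hK i b m (Function.update c n ω) = Zi hM hK i b m c := by
  have hco : ∀ j : Fin K, j.1 < m.1 + 1 → Function.update c n ω j = c j := by
    intro j hj
    apply Function.update_of_ne
    intro hjn
    subst hjn
    exact absurd (Fin.lt_iff_val_lt_val.mp hmn) (by omega)
  unfold Zi
  rw [Sset_ext_congr hM hK i (show m.1 ≤ K from le_of_lt m.2)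
      (fun j hj => hco j (by omega)),
    hco m (by omega)]

lemma Sset_update_self (i : ℕ) (n : Fin K) (c : Fin K → Om K M) (ω : Om K M) :
    Sset hM (ext hK (Function.update c n ω)) i n.1 = Sset hM (ext hK c) i n.1 :=
  Sset_ext_congr hM hK i (le_of_lt n.2) (fun j hj =>
    Function.update_of_ne (fun hjn => by subst hjn; omega) _ _)

lemma Zi_update_self (i b : ℕ) (n : Fin K) (c : Fin K → Om K M) (ω : Om K M) :
    Zi hM hK i b n (Function.update c n ω) =
      if (ω.1 ⊆ Sset hM (ext hK c) i n.1 ∧ (Sset hM (ext hK c) i n.1).card ≤ b)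
      then 1 else 0 := by
  unfold Zi
  rw [Sset_update_self hM hK i n c ω, Function.update_self]

/-! ### Conditional expectation of `Zi` given the past -/

noncomputable def piZ (i b : ℕ) (n : Fin K) (c : Fin K → Om K M) : ℝ :=
  (∑ ω : Om K M, Zi hM hK i b n (Function.update c n ω)) / (Fintype.card (Om K M))

lemma piZ_update_self (i b : ℕ) (n : Fin K) (c : Fin K → Om K M) (ω : Om K M) :
    piZ hM hK i b n (Function.update c n ω) = piZ hM hK i b n c := by
  unfold piZ
  congr 1
  apply Finset.sum_congr rfl
  intro ω' _
  rw [Function.update_idem]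

lemma piZ_update_lt (i b : ℕ) {m n : Fin K} (hmn : m < n) (c : Fin K → Om K M)
    (ω : Om K M) : piZ hM hK i b m (Function.update c n ω) = piZ hM hK i b m c := by
  unfold piZ
  congr 1
  apply Finset.sum_congr rfl
  intro ω' _
  rw [Function.update_comm (fun h => by subst h; exact lt_irrefl _ hmn)]
  exact Zi_update_lt hM hK i b hmn _ ω

lemma piZ_nonneg (i b : ℕ) (n : Fin K) (c : Fin K → Om K M) :
    0 ≤ piZ hM hK i b n c := by
  unfold piZ
  apply div_nonneg
  · exact Finset.sum_nonneg (fun ω _ => Zi_nonneg hM hK i b n _)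
  · positivity

lemma card_Om (hMK : M ≤ K) : Fintype.card (Om K M) = K.choose M := by
  classical
  rw [Fintype.card_subtype]
  rw [show (Finset.univ.filter (fun s : Finset (Fin K) => s.card = M))
      = Finset.powersetCard M Finset.univ by
    ext s
    simp [Finset.mem_powersetCard]]
  rw [Finset.card_powersetCard, Finset.card_univ, Fintype.card_fin]

lemma piZ_le (hMK : M ≤ K) (i b : ℕ) (n : Fin K) (c : Fin K → Om K M) {p : ℝ}
    (hp0 : 0 ≤ p) (hp : (b.choose M : ℝ) ≤ p * (Fintype.card (Om K M))) :
    piZ hM hK i b n c ≤ p := by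
  classical
  haveI : Nonempty (Om K M) := Om_nonempty hMK
  have hNm : (0 : ℝ) < (Fintype.card (Om K M) : ℝ) := by
    exact_mod_cast Fintype.card_pos
  set S := Sset hM (ext hK c) i n.1 with hS
  by_cases hcard : S.card ≤ b
  · have hsum : ∑ ω : Om K M, Zi hM hK i b n (Function.update c n ω)
        = ((Finset.univ.filter (fun ω : Om K M => ω.1 ⊆ S)).card : ℝ) := by
      rw [Finset.card_filter]
      push_cast
      apply Finset.sum_congr rfl
      intro ω _
      rw [Zi_update_self hM hK i b n c ω, ← hS]
      by_cases h : ω.1 ⊆ S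
      · rw [if_pos ⟨h, hcard⟩, if_pos h]
      · rw [if_neg (fun hc => h hc.1), if_neg h]
    have hcount : (Finset.univ.filter (fun ω : Om K M => ω.1 ⊆ S)).card
        = S.card.choose M := by
      rw [← Finset.card_powersetCard M S]
      apply Finset.card_bij (fun ω _ => ω.1)
      · intro ω hω
        rw [Finset.mem_filter] at hω
        rw [Finset.mem_powersetCard]
        exact ⟨hω.2, ω.2⟩
      · intro ω _ ω' _ h
        exact Subtype.ext h
      · intro t ht
        rw [Finset.mem_powersetCard] at ht
        exact ⟨⟨t, ht.2⟩, Finset.mem_filter.mpr ⟨Finset.mem_univ _, ht.1⟩, rfl⟩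
    unfold piZ
    rw [hsum, hcount]
    rw [div_le_iff₀ hNm]
    calc (S.card.choose M : ℝ) ≤ (b.choose M : ℝ) := by
          exact_mod_cast Nat.choose_le_choose M hcard
      _ ≤ p * (Fintype.card (Om K M)) := hp
  · unfold piZ
    have hzero : ∀ ω : Om K M, Zi hM hK i b n (Function.update c n ω) = 0 := by
      intro ω
      rw [Zi_update_self hM hK i b n c ω, if_neg (fun hc => hcard hc.2)]
    rw [Finset.sum_congr rfl (fun ω _ => hzero ω)]
    simp [hp0]

/-! ### Fubini over one coordinate -/

lemma sum_update (n : Fin K) (f : (Fin K → Om K M) → ℝ) :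
    ∑ c : Fin K → Om K M, ∑ ω : Om K M, f (Function.update c n ω)
      = (Fintype.card (Om K M)) * ∑ c : Fin K → Om K M, f c := by
  classical
  set e := Equiv.funSplitAt n (Om K M) with he
  have key : ∀ (c : Fin K → Om K M) (ω : Om K M),
      Function.update c n ω = e.symm (ω, (e c).2) := by
    intro c ω
    funext j
    rw [Equiv.funSplitAt_symm_apply]
    by_cases h : j = n
    · subst h
      rw [Function.update_self, dif_pos rfl]
    · rw [Function.update_of_ne h, dif_neg h]
      rfl
  calc ∑ c : Fin K → Om K M, ∑ ω : Om K M, f (Function.update c n ω)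
      = ∑ c : Fin K → Om K M, ∑ ω : Om K M, f (e.symm (ω, (e c).2)) := by
        apply Finset.sum_congr rfl
        intro c _
        exact Finset.sum_congr rfl (fun ω _ => by rw [key c ω])
    _ = ∑ pr : Om K M × ({j // j ≠ n} → Om K M), ∑ ω : Om K M,
          f (e.symm (ω, pr.2)) := by
        rw [← Equiv.sum_comp e (fun pr => ∑ ω : Om K M, f (e.symm (ω, pr.2)))]
    _ = ∑ v : Om K M, ∑ g : {j // j ≠ n} → Om K M, ∑ ω : Om K M,
          f (e.symm (ω, g)) := by rw [Fintype.sum_prod_type]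
    _ = (Fintype.card (Om K M)) * ∑ g : {j // j ≠ n} → Om K M, ∑ ω : Om K M,
          f (e.symm (ω, g)) := by
        rw [Finset.sum_const, nsmul_eq_mul, Finset.card_univ]
    _ = (Fintype.card (Om K M)) * ∑ c : Fin K → Om K M, f c := by
        congr 1
        rw [Finset.sum_comm]
        calc ∑ ω : Om K M, ∑ g : {j // j ≠ n} → Om K M, f (e.symm (ω, g))
            = ∑ pr : Om K M × ({j // j ≠ n} → Om K M), f (e.symm pr) :=
              (Fintype.sum_prod_type (fun pr => f (e.symm pr))).symm
          _ = ∑ c : Fin K → Om K M, f c := Equiv.sum_comp e.symm f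

lemma exp_piF (n : Fin K) (hMK : M ≤ K) (f : (Fin K → Om K M) → ℝ) :
    ∑ c : Fin K → Om K M,
        (∑ ω : Om K M, f (Function.update c n ω)) / (Fintype.card (Om K M))
      = ∑ c : Fin K → Om K M, f c := by
  haveI : Nonempty (Om K M) := Om_nonempty hMK
  have hpos : (0 : ℝ) < (Fintype.card (Om K M) : ℝ) := by
    exact_mod_cast Fintype.card_pos
  rw [← Finset.sum_div, sum_update n f, mul_comm, mul_div_assoc,
    div_self (ne_of_gt hpos), mul_one]

lemma exp_eq_exp_piZ (hMK : M ≤ K) (i b : ℕ) (n : Fin K) :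
    ∑ c : Fin K → Om K M, Zi hM hK i b n c
      = ∑ c : Fin K → Om K M, piZ hM hK i b n c :=
  (exp_piF n hMK (Zi hM hK i b n)).symm


/-! ### Martingale differences, orthogonality, variance -/

noncomputable def Di (i b : ℕ) (n : Fin K) (c : Fin K → Om K M) : ℝ :=
  Zi hM hK i b n c - piZ hM hK i b n c

lemma sum_Di_update_self (hMK : M ≤ K) (i b : ℕ) (n : Fin K) (c : Fin K → Om K M) :
    ∑ ω : Om K M, Di hM hK i b n (Function.update c n ω) = 0 := by
  haveI : Nonempty (Om K M) := Om_nonempty hMK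
  have hNm : (Fintype.card (Om K M) : ℝ) ≠ 0 := by
    exact_mod_cast Fintype.card_ne_zero
  unfold Di
  rw [Finset.sum_sub_distrib]
  have h1 : ∑ ω : Om K M, piZ hM hK i b n (Function.update c n ω)
      = (Fintype.card (Om K M)) * piZ hM hK i b n c := by
    rw [Finset.sum_congr rfl (fun ω _ => piZ_update_self hM hK i b n c ω),
      Finset.sum_const, nsmul_eq_mul, Finset.card_univ]
  have h2 : ∑ ω : Om K M, Zi hM hK i b n (Function.update c n ω)
      = (Fintype.card (Om K M)) * piZ hM hK i b n c := by
    unfold piZ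
    rw [mul_comm, div_mul_cancel₀ _ hNm]
  rw [h1, h2, sub_self]

lemma Di_update_lt (i b : ℕ) {m n : Fin K} (hmn : m < n) (c : Fin K → Om K M)
    (ω : Om K M) : Di hM hK i b m (Function.update c n ω) = Di hM hK i b m c := by
  unfold Di
  rw [Zi_update_lt hM hK i b hmn c ω, piZ_update_lt hM hK i b hmn c ω]

lemma ortho (hMK : M ≤ K) (i b : ℕ) {m n : Fin K} (hmn : m < n) :
    ∑ c : Fin K → Om K M, Di hM hK i b m c * Di hM hK i b n c = 0 := by
  rw [← exp_piF n hMK (fun c => Di hM hK i b m c * Di hM hK i b n c)]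
  have hzero : ∀ c : Fin K → Om K M,
      ∑ ω : Om K M, Di hM hK i b m (Function.update c n ω)
        * Di hM hK i b n (Function.update c n ω) = 0 := by
    intro c
    have : ∀ ω : Om K M, Di hM hK i b m (Function.update c n ω)
        * Di hM hK i b n (Function.update c n ω)
        = Di hM hK i b m c * Di hM hK i b n (Function.update c n ω) := by
      intro ω
      rw [Di_update_lt hM hK i b hmn c ω]
    rw [Finset.sum_congr rfl (fun ω _ => this ω), ← Finset.mul_sum,
      sum_Di_update_self hM hK hMK i b n c, mul_zero]
  rw [Finset.sum_congr rfl (fun c _ => by rw [hzero c])]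
  simp

lemma piZ_le_one (i b : ℕ) (n : Fin K) (c : Fin K → Om K M) :
    piZ hM hK i b n c ≤ 1 := by
  unfold piZ
  by_cases hNm : (0:ℝ) < (Fintype.card (Om K M) : ℝ)
  · rw [div_le_one hNm]
    calc ∑ ω : Om K M, Zi hM hK i b n (Function.update c n ω)
        ≤ ∑ _ω : Om K M, (1:ℝ) := Finset.sum_le_sum (fun ω _ => Zi_le_one hM hK i b n _)
      _ = (Fintype.card (Om K M) : ℝ) := by
          rw [Finset.sum_const, nsmul_eq_mul, mul_one, Finset.card_univ]
  · have h0 : (Fintype.card (Om K M) : ℝ) = 0 := by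
      have h' : (0:ℝ) ≤ (Fintype.card (Om K M) : ℝ) := by positivity
      rcases eq_or_lt_of_le h' with h | h
      · exact h.symm
      · exact absurd h hNm
    rw [h0, div_zero]
    norm_num

lemma Di_sq_le (i b : ℕ) (n : Fin K) (c : Fin K → Om K M) :
    Di hM hK i b n c ^ 2 ≤ Zi hM hK i b n c + piZ hM hK i b n c := by
  have hz : Zi hM hK i b n c * Zi hM hK i b n c = Zi hM hK i b n c := by
    unfold Zi
    split <;> norm_num
  have h1 := Zi_nonneg hM hK i b n c
  have h2 := piZ_nonneg hM hK i b n c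
  have h3 := piZ_le_one hM hK i b n c
  unfold Di
  nlinarith

lemma exp_Zi_le (hMK : M ≤ K) (i b : ℕ) (n : Fin K) {p : ℝ} (hp0 : 0 ≤ p)
    (hp : (b.choose M : ℝ) ≤ p * (Fintype.card (Om K M))) :
    ∑ c : Fin K → Om K M, Zi hM hK i b n c
      ≤ p * (Fintype.card (Om K M) : ℝ) ^ K := by
  rw [exp_eq_exp_piZ hM hK hMK i b n]
  calc ∑ c : Fin K → Om K M, piZ hM hK i b n c
      ≤ ∑ _c : Fin K → Om K M, p :=
        Finset.sum_le_sum (fun c _ => piZ_le hM hK hMK i b n c hp0 hp)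
    _ = (Fintype.card (Fin K → Om K M) : ℝ) * p := by
        rw [Finset.sum_const, nsmul_eq_mul, Finset.card_univ]
    _ = p * (Fintype.card (Om K M) : ℝ) ^ K := by
        rw [Fintype.card_fun, Fintype.card_fin]
        push_cast
        ring

lemma variance_le (hMK : M ≤ K) (i b : ℕ) {p : ℝ} (hp0 : 0 ≤ p)
    (hp : (b.choose M : ℝ) ≤ p * (Fintype.card (Om K M))) :
    ∑ c : Fin K → Om K M, (∑ n : Fin K, Di hM hK i b n c) ^ 2
      ≤ 2 * K * p * (Fintype.card (Om K M) : ℝ) ^ K := by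
  have hexp : ∀ c : Fin K → Om K M, (∑ n : Fin K, Di hM hK i b n c) ^ 2
      = ∑ m : Fin K, ∑ n : Fin K, Di hM hK i b m c * Di hM hK i b n c := by
    intro c
    rw [sq, Finset.sum_mul_sum]
  rw [Finset.sum_congr rfl (fun c _ => hexp c), Finset.sum_comm]
  have hsplit : ∀ m : Fin K, ∑ c : Fin K → Om K M,
      ∑ n : Fin K, Di hM hK i b m c * Di hM hK i b n c
      = ∑ n : Fin K, ∑ c : Fin K → Om K M, Di hM hK i b m c * Di hM hK i b n c :=
    fun m => Finset.sum_comm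
  rw [Finset.sum_congr rfl (fun m _ => hsplit m)]
  have hdiag : ∀ m n : Fin K, ∑ c : Fin K → Om K M,
      Di hM hK i b m c * Di hM hK i b n c
      ≤ if m = n then 2 * p * (Fintype.card (Om K M) : ℝ) ^ K else 0 := by
    intro m n
    rcases lt_trichotomy m n with h | h | h
    · rw [if_neg (ne_of_lt h), ortho hM hK hMK i b h]
    · subst h
      rw [if_pos rfl]
      calc ∑ c : Fin K → Om K M, Di hM hK i b m c * Di hM hK i b m c
          ≤ ∑ c : Fin K → Om K M, (Zi hM hK i b m c + piZ hM hK i b m c) := by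
            apply Finset.sum_le_sum
            intro c _
            have := Di_sq_le hM hK i b m c
            rw [sq] at this
            exact this
        _ = ∑ c : Fin K → Om K M, Zi hM hK i b m c
            + ∑ c : Fin K → Om K M, piZ hM hK i b m c := Finset.sum_add_distrib
        _ = ∑ c : Fin K → Om K M, Zi hM hK i b m c
            + ∑ c : Fin K → Om K M, Zi hM hK i b m c := by
            rw [← exp_eq_exp_piZ hM hK hMK i b m]
        _ ≤ p * (Fintype.card (Om K M) : ℝ) ^ K + p * (Fintype.card (Om K M) : ℝ) ^ K := by
            have := exp_Zi_le hM hK hMK i b m hp0 hp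
            linarith
        _ = 2 * p * (Fintype.card (Om K M) : ℝ) ^ K := by ring
    · rw [if_neg (ne_of_gt h)]
      have : ∀ c : Fin K → Om K M, Di hM hK i b m c * Di hM hK i b n c
          = Di hM hK i b n c * Di hM hK i b m c := fun c => mul_comm _ _
      rw [Finset.sum_congr rfl (fun c _ => this c), ortho hM hK hMK i b h]
  calc ∑ m : Fin K, ∑ n : Fin K, ∑ c : Fin K → Om K M,
        Di hM hK i b m c * Di hM hK i b n c
      ≤ ∑ m : Fin K, ∑ n : Fin K,
          (if m = n then 2 * p * (Fintype.card (Om K M) : ℝ) ^ K else 0) :=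
        Finset.sum_le_sum (fun m _ => Finset.sum_le_sum (fun n _ => hdiag m n))
    _ = ∑ m : Fin K, 2 * p * (Fintype.card (Om K M) : ℝ) ^ K := by
        apply Finset.sum_congr rfl
        intro m _
        simp
    _ = 2 * K * p * (Fintype.card (Om K M) : ℝ) ^ K := by
        rw [Finset.sum_const, nsmul_eq_mul, Finset.card_univ, Fintype.card_fin]
        ring


/-! ### Chebyshev and Markov counting bounds -/

lemma Ti_nonneg (i b : ℕ) (c : Fin K → Om K M) : 0 ≤ Ti hM hK i b c :=
  Finset.sum_nonneg (fun n _ => Zi_nonneg hM hK i b n c)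

lemma cheb_count (hMK : M ≤ K) (i b : ℕ) {p a : ℝ} (hp0 : 0 ≤ p) (ha : 0 < a)
    (hp : (b.choose M : ℝ) ≤ p * (Fintype.card (Om K M))) :
    ((Finset.univ.filter
        (fun c : Fin K → Om K M => K * p + a ≤ Ti hM hK i b c)).card : ℝ) * a ^ 2
      ≤ 2 * K * p * (Fintype.card (Om K M) : ℝ) ^ K := by
  classical
  set F := Finset.univ.filter (fun c : Fin K → Om K M => K * p + a ≤ Ti hM hK i b c)
    with hF
  have hDi : ∀ c ∈ F, a ≤ ∑ n : Fin K, Di hM hK i b n c := by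
    intro c hc
    rw [hF, Finset.mem_filter] at hc
    have hT := hc.2
    have hpi : ∑ n : Fin K, piZ hM hK i b n c ≤ K * p := by
      calc ∑ n : Fin K, piZ hM hK i b n c ≤ ∑ _n : Fin K, p :=
            Finset.sum_le_sum (fun n _ => piZ_le hM hK hMK i b n c hp0 hp)
        _ = K * p := by
            rw [Finset.sum_const, nsmul_eq_mul, Finset.card_univ, Fintype.card_fin]
    have : ∑ n : Fin K, Di hM hK i b n c
        = Ti hM hK i b c - ∑ n : Fin K, piZ hM hK i b n c := by
      unfold Di Ti
      rw [Finset.sum_sub_distrib]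
    rw [this]
    unfold Ti at hT ⊢
    linarith
  calc (F.card : ℝ) * a ^ 2 = ∑ _c ∈ F, a ^ 2 := by
        rw [Finset.sum_const, nsmul_eq_mul]
    _ ≤ ∑ c ∈ F, (∑ n : Fin K, Di hM hK i b n c) ^ 2 := by
        apply Finset.sum_le_sum
        intro c hc
        exact pow_le_pow_left₀ (le_of_lt ha) (hDi c hc) 2
    _ ≤ ∑ c : Fin K → Om K M, (∑ n : Fin K, Di hM hK i b n c) ^ 2 :=
        Finset.sum_le_sum_of_subset_of_nonneg (Finset.subset_univ F)
          (fun c _ _ => sq_nonneg _)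
    _ ≤ 2 * K * p * (Fintype.card (Om K M) : ℝ) ^ K := variance_le hM hK hMK i b hp0 hp

lemma markov_count (hMK : M ≤ K) (i b : ℕ) {p a : ℝ} (hp0 : 0 ≤ p) (ha : 0 < a)
    (hp : (b.choose M : ℝ) ≤ p * (Fintype.card (Om K M))) :
    ((Finset.univ.filter
        (fun c : Fin K → Om K M => a ≤ Ti hM hK i b c)).card : ℝ) * a
      ≤ K * p * (Fintype.card (Om K M) : ℝ) ^ K := by
  classical
  set F := Finset.univ.filter (fun c : Fin K → Om K M => a ≤ Ti hM hK i b c) with hF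
  calc (F.card : ℝ) * a = ∑ _c ∈ F, a := by rw [Finset.sum_const, nsmul_eq_mul]
    _ ≤ ∑ c ∈ F, Ti hM hK i b c := by
        apply Finset.sum_le_sum
        intro c hc
        rw [hF, Finset.mem_filter] at hc
        exact hc.2
    _ ≤ ∑ c : Fin K → Om K M, Ti hM hK i b c :=
        Finset.sum_le_sum_of_subset_of_nonneg (Finset.subset_univ F)
          (fun c _ _ => Ti_nonneg hM hK i b c)
    _ = ∑ n : Fin K, ∑ c : Fin K → Om K M, Zi hM hK i b n c := Finset.sum_comm
    _ ≤ ∑ _n : Fin K, p * (Fintype.card (Om K M) : ℝ) ^ K :=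
        Finset.sum_le_sum (fun n _ => exp_Zi_le hM hK hMK i b n hp0 hp)
    _ = K * p * (Fintype.card (Om K M) : ℝ) ^ K := by
        rw [Finset.sum_const, nsmul_eq_mul, Finset.card_univ, Fintype.card_fin]
        ring


/-! ### Binomial ratio bound -/

lemma choose_ratio (hM2 : 2 ≤ M) (h2M : 2 * M ≤ K) (b : ℕ) {x : ℝ} (hx0 : 0 ≤ x)
    (hb : (b : ℝ) ≤ K * x) :
    (b.choose M : ℝ) ≤ (2 * x) ^ M * (K.choose M) := by
  have hfac : (0 : ℝ) < (Nat.factorial M : ℝ) := by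
    exact_mod_cast Nat.factorial_pos M
  rw [← mul_le_mul_iff_of_pos_right hfac]
  have hl : (b.choose M : ℝ) * (Nat.factorial M) = (b.descFactorial M : ℝ) := by
    rw [Nat.descFactorial_eq_factorial_mul_choose]
    push_cast
    ring
  have hr : ((K.choose M : ℝ)) * (Nat.factorial M) = (K.descFactorial M : ℝ) := by
    rw [Nat.descFactorial_eq_factorial_mul_choose]
    push_cast
    ring
  rw [hl, mul_assoc, hr]
  have h1 : (b.descFactorial M : ℝ) ≤ (b : ℝ) ^ M := by
    exact_mod_cast Nat.descFactorial_le_pow b M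
  have h2 : ((K : ℝ) / 2) ^ M ≤ (K.descFactorial M : ℝ) := by
    have hsub : ((K : ℝ) / 2) ≤ ((K + 1 - M : ℕ) : ℝ) := by
      have : M ≤ K + 1 := by omega
      push_cast [this]
      have : (M : ℝ) ≤ K / 2 + 1 := by
        have : (2 * M : ℝ) ≤ K := by exact_mod_cast h2M
        linarith
      linarith
    calc ((K : ℝ) / 2) ^ M ≤ ((K + 1 - M : ℕ) : ℝ) ^ M := by
          apply pow_le_pow_left₀ (by positivity) hsub
      _ ≤ (K.descFactorial M : ℝ) := by
          exact_mod_cast Nat.pow_sub_le_descFactorial K M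
  calc (b.descFactorial M : ℝ) ≤ (b : ℝ) ^ M := h1
    _ ≤ ((K : ℝ) * x) ^ M := by
        apply pow_le_pow_left₀ (by positivity) hb
    _ = (2 * x) ^ M * ((K : ℝ) / 2) ^ M := by
        rw [← mul_pow]
        congr 1
        ring
    _ ≤ (2 * x) ^ M * (K.descFactorial M : ℝ) := by
        apply mul_le_mul_of_nonneg_left h2 (by positivity)

/-! ### The doubly-exponential threshold schedule -/

noncomputable def xseq (M : ℕ) : ℕ → ℝ
  | 0 => 1 / 32
  | (j + 1) => 2 * (2 * xseq M j) ^ M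

lemma xseq_pos (M : ℕ) (j : ℕ) : 0 < xseq M j := by
  induction j with
  | zero => norm_num [xseq]
  | succ j ih =>
    show 0 < 2 * (2 * xseq M j) ^ M
    positivity

lemma xseq_le (hM2 : 2 ≤ M) (j : ℕ) : xseq M j ≤ 1 / 32 := by
  induction j with
  | zero => norm_num [xseq]
  | succ j ih =>
    show 2 * (2 * xseq M j) ^ M ≤ 1 / 32
    have hpos := xseq_pos M j
    have h1 : 2 * xseq M j ≤ 1 / 16 := by linarith
    calc 2 * (2 * xseq M j) ^ M ≤ 2 * (1 / 16 : ℝ) ^ M := by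
          apply mul_le_mul_of_nonneg_left _ (by norm_num)
          apply pow_le_pow_left₀ (by positivity) h1
      _ ≤ 2 * (1 / 16 : ℝ) ^ 2 := by
          apply mul_le_mul_of_nonneg_left _ (by norm_num)
          apply pow_le_pow_of_le_one (by norm_num) (by norm_num) hM2
      _ ≤ 1 / 32 := by norm_num

lemma xseq_succ (M j : ℕ) : xseq M (j + 1) = 2 * (2 * xseq M j) ^ M := rfl

lemma xseq_decr (hM2 : 2 ≤ M) (j : ℕ) : xseq M (j + 1) ≤ xseq M j / 4 := by
  have hpos := xseq_pos M j
  have hle := xseq_le hM2 j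
  have h1 : 2 * xseq M j ≤ 1 / 16 := by linarith
  have h2 : (2 * xseq M j) ^ M ≤ (2 * xseq M j) ^ 2 := by
    apply pow_le_pow_of_le_one (by positivity) (by linarith) hM2
  rw [xseq_succ]
  nlinarith

lemma xseq_upper (hM2 : 2 ≤ M) (j : ℕ) : xseq M j ≤ (1 / 4 : ℝ) ^ (M ^ j) := by
  have key : ∀ j, 8 * xseq M j ≤ (1 / 4 : ℝ) ^ (M ^ j) := by
    intro j
    induction j with
    | zero => norm_num [xseq]
    | succ j ih =>
      have hpos := xseq_pos M j
      have hyle1 : 8 * xseq M j ≤ 1 := le_trans ih (by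
        apply pow_le_one₀ <;> norm_num)
      have hxp : (2 * xseq M j) ^ M = 2 ^ M * xseq M j ^ M := mul_pow 2 _ M
      have hxp8 : (8 * xseq M j) ^ M = 8 ^ M * xseq M j ^ M := mul_pow 8 _ M
      have h48 : ((1/4 : ℝ)) ^ M * 8 ^ M = 2 ^ M := by
        rw [← mul_pow]
        norm_num
      calc 8 * xseq M (j + 1) = 16 * ((1/4 : ℝ))^M * (8 * xseq M j) ^ M := by
            rw [xseq_succ, hxp, hxp8,
              show (16:ℝ)*((1/4:ℝ))^M*(8^M* xseq M j ^M)
                = 16*(((1/4:ℝ))^M*8^M)* xseq M j ^M by ring, h48]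
            ring
        _ ≤ 1 * (8 * xseq M j) ^ M := by
            apply mul_le_mul_of_nonneg_right _ (by positivity)
            calc (16 : ℝ) * (1/4)^M ≤ 16 * (1/4)^2 := by
                  apply mul_le_mul_of_nonneg_left _ (by norm_num)
                  apply pow_le_pow_of_le_one (by norm_num) (by norm_num) hM2
              _ = 1 := by norm_num
        _ = (8 * xseq M j) ^ M := one_mul _
        _ ≤ ((1/4 : ℝ) ^ (M ^ j)) ^ M := by
            apply pow_le_pow_left₀ (by positivity) ih
        _ = (1/4 : ℝ) ^ (M ^ (j+1)) := by
            rw [← pow_mul, pow_succ]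
  have := key j
  have hpos := xseq_pos M j
  linarith


/-! ### Layered induction -/

section Main

variable (hM : 0 < M) (hK : 0 < K)

noncomputable def nuR (c : Fin K → Om K M) (i : ℕ) : ℝ :=
  ((Sset hM (ext hK c) i K).card : ℝ)

/-- Level event: at most `K * xseq M j` bins have final load `≥ 32 + j`. -/
def Evt (j : ℕ) (c : Fin K → Om K M) : Prop :=
  nuR hM hK c (32 + j) ≤ K * xseq M j

lemma Evt_zero (c : Fin K → Om K M) : Evt hM hK 0 c := by
  unfold Evt nuR
  have h := Sset_base_card hM (ext hK c) hK (show 0 < 32 + 0 by norm_num)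
  have h' : ((Sset hM (ext hK c) (32 + 0) K).card : ℝ) * 32 ≤ K := by
    exact_mod_cast (by exact_mod_cast h : ((Sset hM (ext hK c) (32+0) K).card * (32+0) : ℕ) ≤ (K:ℕ))
  rw [show xseq M 0 = 1/32 from rfl]
  linarith

open Classical in
lemma chain_step (hM2 : 2 ≤ M) (h2M : 2 * M ≤ K) (j : ℕ) :
    ((Finset.univ.filter (fun c : Fin K → Om K M => ¬ Evt hM hK (j+1) c)).card : ℝ)
      ≤ ((Finset.univ.filter (fun c : Fin K → Om K M => ¬ Evt hM hK j c)).card : ℝ)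
        + (4 / (K * xseq M (j+1))) * (Fintype.card (Om K M) : ℝ) ^ K := by
  set b := ⌊(K : ℝ) * xseq M j⌋₊ with hb
  set p := (2 * xseq M j) ^ M with hp
  set a := (K : ℝ) * xseq M (j+1) / 2 with ha
  have hxpos := xseq_pos M j
  have hxpos1 := xseq_pos M (j+1)
  have hKpos : (0:ℝ) < K := by exact_mod_cast hK
  have hppos : 0 < p := by rw [hp]; positivity
  have hapos : 0 < a := by rw [ha]; positivity
  have hpx : p = xseq M (j+1) / 2 := by rw [hp, xseq_succ]; ring
  have hKpa : (K:ℝ) * p + a = K * xseq M (j+1) := by rw [hpx, ha]; ring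
  -- inclusion into union
  have hsub : (Finset.univ.filter (fun c : Fin K → Om K M => ¬ Evt hM hK (j+1) c))
      ⊆ (Finset.univ.filter (fun c : Fin K → Om K M => ¬ Evt hM hK j c))
        ∪ (Finset.univ.filter
            (fun c : Fin K → Om K M => K * p + a ≤ Ti hM hK (32+j) b c)) := by
    intro c hc
    rw [Finset.mem_filter] at hc
    rw [Finset.mem_union, Finset.mem_filter, Finset.mem_filter]
    by_cases hEj : Evt hM hK j c
    · right
      refine ⟨Finset.mem_univ _, ?_⟩
      have hcap : (Sset hM (ext hK c) (32+j) K).card ≤ b := by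
        rw [hb]
        exact Nat.le_floor hEj
      have hTi := card_le_Ti hM hK (32+j) b c hcap
      have hnu : K * xseq M (j+1) < nuR hM hK c (32+(j+1)) := by
        have := hc.2
        unfold Evt at this
        linarith [not_le.mp this]
      rw [hKpa]
      calc (K:ℝ) * xseq M (j+1) ≤ nuR hM hK c (32+(j+1)) := le_of_lt hnu
        _ = ((Sset hM (ext hK c) ((32+j)+1) K).card : ℝ) := by
            unfold nuR
            norm_num [Nat.add_assoc]
        _ ≤ Ti hM hK (32+j) b c := hTi
    · left
      exact ⟨Finset.mem_univ _, hEj⟩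
  have hcard := Finset.card_le_card hsub
  have hunion := Finset.card_union_le
    (Finset.univ.filter (fun c : Fin K → Om K M => ¬ Evt hM hK j c))
    (Finset.univ.filter (fun c : Fin K → Om K M => K * p + a ≤ Ti hM hK (32+j) b c))
  -- Chebyshev bound on the second card
  have hchoose : ((b.choose M : ℕ) : ℝ) ≤ p * (Fintype.card (Om K M)) := by
    rw [card_Om (by omega), hp]
    apply choose_ratio hM2 h2M b (le_of_lt hxpos)
    exact Nat.floor_le (by positivity)
  have hcheb := cheb_count hM hK (by omega) (32+j) b (le_of_lt hppos) hapos hchoose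
  have h2 : ((Finset.univ.filter
      (fun c : Fin K → Om K M => K * p + a ≤ Ti hM hK (32+j) b c)).card : ℝ)
      ≤ (4 / (K * xseq M (j+1))) * (Fintype.card (Om K M) : ℝ) ^ K := by
    rw [← mul_le_mul_iff_of_pos_right (show (0:ℝ) < a^2 by positivity)]
    calc ((Finset.univ.filter
        (fun c : Fin K → Om K M => K * p + a ≤ Ti hM hK (32+j) b c)).card : ℝ) * a^2
        ≤ 2 * K * p * (Fintype.card (Om K M) : ℝ) ^ K := hcheb
      _ = (4 / (K * xseq M (j+1))) * (Fintype.card (Om K M) : ℝ) ^ K * a^2 := by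
          rw [hpx, ha]
          field_simp
          ring
  calc ((Finset.univ.filter (fun c : Fin K → Om K M => ¬ Evt hM hK (j+1) c)).card : ℝ)
      ≤ (((Finset.univ.filter (fun c : Fin K → Om K M => ¬ Evt hM hK j c)).card
          + (Finset.univ.filter
            (fun c : Fin K → Om K M => K * p + a ≤ Ti hM hK (32+j) b c)).card : ℕ) : ℝ) := by
        exact_mod_cast le_trans hcard hunion
    _ ≤ ((Finset.univ.filter (fun c : Fin K → Om K M => ¬ Evt hM hK j c)).card : ℝ)
        + (4 / (K * xseq M (j+1))) * (Fintype.card (Om K M) : ℝ) ^ K := by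
        push_cast
        linarith

open Classical in
lemma chain (hM2 : 2 ≤ M) (h2M : 2 * M ≤ K) (L : ℕ) :
    ((Finset.univ.filter (fun c : Fin K → Om K M => ¬ Evt hM hK L c)).card : ℝ)
      ≤ (8 / (K * xseq M L)) * (Fintype.card (Om K M) : ℝ) ^ K := by
  induction L with
  | zero =>
    have : (Finset.univ.filter (fun c : Fin K → Om K M => ¬ Evt hM hK 0 c)) = ∅ := by
      rw [Finset.eq_empty_iff_forall_notMem]
      intro c hc
      rw [Finset.mem_filter] at hc
      exact hc.2 (Evt_zero hM hK c)
    rw [this]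
    have hKpos : (0:ℝ) < K := by exact_mod_cast hK
    have := xseq_pos M 0
    have : (0:ℝ) ≤ 8 / (K * xseq M 0) := by positivity
    have hNm : (0:ℝ) ≤ (Fintype.card (Om K M) : ℝ) ^ K := by positivity
    simpa using mul_nonneg this hNm
  | succ L ih =>
    have hKpos : (0:ℝ) < K := by exact_mod_cast hK
    have hxL := xseq_pos M L
    have hxL1 := xseq_pos M (L+1)
    have hdecr := xseq_decr hM2 L
    have step := chain_step hM hK hM2 h2M L
    have hNm : (0:ℝ) ≤ (Fintype.card (Om K M) : ℝ) ^ K := by positivity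
    have hmon : 8 / ((K:ℝ) * xseq M L) ≤ 2 / (K * xseq M (L+1)) := by
      rw [div_le_div_iff₀ (by positivity) (by positivity)]
      have : xseq M (L+1) * 4 ≤ xseq M L := by linarith
      nlinarith
    have h1 : ((Finset.univ.filter
        (fun c : Fin K → Om K M => ¬ Evt hM hK L c)).card : ℝ)
        ≤ (2 / (K * xseq M (L+1))) * (Fintype.card (Om K M) : ℝ) ^ K :=
      le_trans ih (mul_le_mul_of_nonneg_right hmon hNm)
    have hfinal : (2 / ((K:ℝ) * xseq M (L+1))) * (Fintype.card (Om K M) : ℝ) ^ K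
        + (4 / ((K:ℝ) * xseq M (L+1))) * (Fintype.card (Om K M) : ℝ) ^ K
        ≤ (8 / ((K:ℝ) * xseq M (L+1))) * (Fintype.card (Om K M) : ℝ) ^ K := by
      have : (2 / ((K:ℝ) * xseq M (L+1))) + 4 / ((K:ℝ) * xseq M (L+1))
          ≤ 8 / ((K:ℝ) * xseq M (L+1)) := by
        rw [← add_div, div_le_div_iff₀ (by positivity) (by positivity)]
        nlinarith
      nlinarith [this, hNm]
    linarith

open Classical in
lemma main_count (hM2 : 2 ≤ M) (h2M : 2 * M ≤ K) {ε t : ℝ} (hε : 0 < ε) (L : ℕ)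
    (hxgt : ε < xseq M L) (hxle : xseq M (L+1) ≤ ε) (htpos : 0 < t)
    (hεt : K * ε ≤ t) :
    ((Finset.univ.filter (fun c : Fin K → Om K M =>
        ∃ k, 34 + L ≤ loadsProc hM (ext hK c) K k)).card : ℝ)
      ≤ (8 / (K * ε) + 4 * (K * ε) / t^2 + K * (2 * (t / K))^M)
          * (Fintype.card (Om K M) : ℝ) ^ K := by
  have hKpos : (0:ℝ) < K := by exact_mod_cast hK
  have hxLpos := xseq_pos M L
  have hxL1pos := xseq_pos M (L+1)
  set Nm := (Fintype.card (Om K M) : ℝ) ^ K with hNm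
  have hNmpos : 0 ≤ Nm := by positivity
  -- parameters of the special Chebyshev step
  set bL := ⌊(K : ℝ) * xseq M L⌋₊ with hbL
  set pL := (2 * xseq M L) ^ M with hpL
  have hpLx : pL = xseq M (L+1) / 2 := by rw [hpL, xseq_succ]; ring
  have hKpL : (K:ℝ) * pL ≤ t / 2 := by
    rw [hpLx]
    calc (K:ℝ) * (xseq M (L+1)/2) ≤ K * (ε/2) := by
          apply mul_le_mul_of_nonneg_left _ (le_of_lt hKpos)
          linarith
      _ ≤ t / 2 := by linarith
  set aL := t - (K:ℝ) * pL with haL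
  have haLpos : 0 < aL := by
    rw [haL]
    have : (0:ℝ) < K * pL := by rw [hpL]; positivity
    linarith
  have haLge : t / 2 ≤ aL := by rw [haL]; linarith
  -- parameters of the final Markov step
  set bs := ⌊t⌋₊ with hbs
  set ps := (2 * (t / K)) ^ M with hps
  -- the three bad events
  set A := Finset.univ.filter (fun c : Fin K → Om K M => ¬ Evt hM hK L c) with hA
  set B := Finset.univ.filter
    (fun c : Fin K → Om K M => K * pL + aL ≤ Ti hM hK (32+L) bL c) with hB
  set Cev := Finset.univ.filter
    (fun c : Fin K → Om K M => (1:ℝ) ≤ Ti hM hK (33+L) bs c) with hC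
  have hsub : (Finset.univ.filter (fun c : Fin K → Om K M =>
      ∃ k, 34 + L ≤ loadsProc hM (ext hK c) K k)) ⊆ A ∪ B ∪ Cev := by
    intro c hc
    rw [Finset.mem_filter] at hc
    obtain ⟨-, k, hk⟩ := hc
    have hnu1 : (1:ℝ) ≤ nuR hM hK c (34+L) := by
      unfold nuR
      have : k ∈ Sset hM (ext hK c) (34+L) K := (mem_Sset hM _).mpr hk
      have : 0 < (Sset hM (ext hK c) (34+L) K).card := Finset.card_pos.mpr ⟨k, this⟩
      exact_mod_cast this
    simp only [Finset.mem_union]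
    by_cases hEL : Evt hM hK L c
    · by_cases hnu33 : nuR hM hK c (33+L) ≤ t
      · right
        rw [hC, Finset.mem_filter]
        refine ⟨Finset.mem_univ _, ?_⟩
        have hcap : (Sset hM (ext hK c) (33+L) K).card ≤ bs := by
          rw [hbs]
          exact Nat.le_floor hnu33
        have hTi := card_le_Ti hM hK (33+L) bs c hcap
        calc (1:ℝ) ≤ nuR hM hK c (34+L) := hnu1
          _ = ((Sset hM (ext hK c) ((33+L)+1) K).card : ℝ) := by
              unfold nuR
              rw [show 34 + L = (33 + L) + 1 by omega]
          _ ≤ Ti hM hK (33+L) bs c := hTi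
      · left; right
        rw [hB, Finset.mem_filter]
        refine ⟨Finset.mem_univ _, ?_⟩
        have hcap : (Sset hM (ext hK c) (32+L) K).card ≤ bL := by
          rw [hbL]
          exact Nat.le_floor hEL
        have hTi := card_le_Ti hM hK (32+L) bL c hcap
        have : K * pL + aL = t := by rw [haL]; ring
        rw [this]
        calc t ≤ nuR hM hK c (33+L) := le_of_lt (not_le.mp hnu33)
          _ = ((Sset hM (ext hK c) ((32+L)+1) K).card : ℝ) := by
              unfold nuR
              rw [show 33 + L = (32 + L) + 1 by omega]
          _ ≤ Ti hM hK (32+L) bL c := hTi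
    · left; left
      rw [hA, Finset.mem_filter]
      exact ⟨Finset.mem_univ _, hEL⟩
  -- bound each card
  have hcardA : ((A.card : ℕ) : ℝ) ≤ 8 / (K * ε) * Nm := by
    rw [hA]
    refine le_trans (chain hM hK hM2 h2M L) ?_
    apply mul_le_mul_of_nonneg_right _ hNmpos
    apply div_le_div_of_nonneg_left (by norm_num) (by positivity)
    apply mul_le_mul_of_nonneg_left (le_of_lt hxgt) (le_of_lt hKpos)
  have hcardB : ((B.card : ℕ) : ℝ) ≤ 4 * (K * ε) / t^2 * Nm := by
    have hchoose : ((bL.choose M : ℕ) : ℝ) ≤ pL * (Fintype.card (Om K M)) := by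
      rw [card_Om (by omega), hpL]
      apply choose_ratio hM2 h2M bL (le_of_lt hxLpos)
      exact Nat.floor_le (by positivity)
    have hcheb := cheb_count hM hK (by omega) (32+L) bL
      (le_of_lt (show (0:ℝ) < pL by rw [hpL]; positivity)) haLpos hchoose
    rw [← hB] at hcheb
    have ht2 : (0:ℝ) < t^2 := by positivity
    rw [← mul_le_mul_iff_of_pos_right (show (0:ℝ) < aL^2 by positivity)]
    calc ((B.card : ℕ) : ℝ) * aL^2 ≤ 2 * K * pL * Nm := hcheb
      _ ≤ (K * ε) * Nm := by
          have : 2 * (K:ℝ) * pL ≤ K * ε := by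
            rw [hpLx]
            have : (K:ℝ) * xseq M (L+1) ≤ K * ε :=
              mul_le_mul_of_nonneg_left hxle (le_of_lt hKpos)
            linarith
          exact mul_le_mul_of_nonneg_right this hNmpos
      _ ≤ 4 * (K * ε) / t^2 * Nm * aL^2 := by
          have h4 : t^2 ≤ 4 * aL^2 := by nlinarith
          have hKε : (0:ℝ) ≤ K * ε := by positivity
          rw [div_mul_eq_mul_div, div_mul_eq_mul_div, le_div_iff₀ ht2]
          nlinarith [mul_nonneg hKε hNmpos]
  have hcardC : ((Cev.card : ℕ) : ℝ) ≤ K * ps * Nm := by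
    have hchoose : ((bs.choose M : ℕ) : ℝ) ≤ ps * (Fintype.card (Om K M)) := by
      rw [card_Om (by omega), hps]
      apply choose_ratio hM2 h2M bs (by positivity)
      rw [show (K:ℝ) * (t/K) = t by field_simp]
      exact Nat.floor_le (le_of_lt htpos)
    have hmark := markov_count hM hK (by omega) (33+L) bs
      (le_of_lt (show (0:ℝ) < ps by rw [hps]; positivity)) one_pos hchoose
    rw [← hC] at hmark
    calc ((Cev.card : ℕ) : ℝ) = ((Cev.card : ℕ) : ℝ) * 1 := by ring
      _ ≤ K * ps * Nm := hmark
  calc ((Finset.univ.filter (fun c : Fin K → Om K M =>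
        ∃ k, 34 + L ≤ loadsProc hM (ext hK c) K k)).card : ℝ)
      ≤ ((A ∪ B ∪ Cev).card : ℝ) := by exact_mod_cast Finset.card_le_card hsub
    _ ≤ ((A.card + B.card + Cev.card : ℕ) : ℝ) := by
        exact_mod_cast le_trans (Finset.card_union_le _ _)
          (Nat.add_le_add_right (Finset.card_union_le _ _) _)
    _ ≤ 8 / (K * ε) * Nm + 4 * (K * ε) / t^2 * Nm + K * ps * Nm := by
        push_cast
        push_cast at hcardA hcardB hcardC
        linarith
    _ = (8 / (K * ε) + 4 * (K * ε) / t^2 + K * (2 * (t / K))^M) * Nm := by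
        rw [hps]
        ring

end Main
end Prob

/-! ### Uniform PMF as counting -/

open scoped ENNReal in
lemma pmf_unif_toReal {α : Type*} [Fintype α] [Nonempty α] (p : α → Prop)
    [DecidablePred p] :
    ((PMF.uniformOfFintype α).toOuterMeasure {a | p a}).toReal
      = ((Finset.univ.filter p).card : ℝ) / Fintype.card α := by
  rw [PMF.toOuterMeasure_apply, tsum_fintype]
  have heq : ∀ a : α, ({a | p a} : Set α).indicator (⇑(PMF.uniformOfFintype α)) a
      = if p a then ((Fintype.card α : ℝ≥0∞))⁻¹ else 0 := by
    intro a
    simp only [Set.indicator_apply, Set.mem_setOf_eq, PMF.uniformOfFintype_apply]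
  rw [Finset.sum_congr rfl (fun a _ => heq a), Finset.sum_ite, Finset.sum_const,
    Finset.sum_const_zero, add_zero]
  rw [nsmul_eq_mul, ENNReal.toReal_mul, ENNReal.toReal_inv]
  simp only [ENNReal.toReal_natCast]
  ring

/-- The schedule eventually drops below any positive threshold. -/
lemma exists_xseq_le {M : ℕ} (hM2 : 2 ≤ M) {ε : ℝ} (hε : 0 < ε) :
    ∃ j, xseq M j ≤ ε := by
  obtain ⟨j, hj⟩ := exists_pow_lt_of_lt_one hε (show (1/4 : ℝ) < 1 by norm_num)
  refine ⟨j, le_trans (xseq_upper hM2 j) (le_trans ?_ (le_of_lt hj))⟩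
  apply pow_le_pow_of_le_one (by norm_num) (by norm_num)
  calc j ≤ 2 ^ j := (Nat.lt_two_pow_self (n := j)).le
    _ ≤ M ^ j := Nat.pow_le_pow_left hM2 j

/-! ### Eventual bounds and limits -/

lemma rpow_tendsto_zero {y : ℝ} (hy : 0 < y) :
    Filter.Tendsto (fun K : ℕ => (K : ℝ) ^ (-y)) Filter.atTop (nhds 0) :=
  (tendsto_rpow_neg_atTop hy).comp tendsto_natCast_atTop_atTop

end ABKU


open ABKU

/-- Azar–Broder–Karlin–Upfal "power of `M` choices": if `N = K` balls (users) are placed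
sequentially into `K` bins (channels), each ball choosing the least loaded among `M ≥ 2`
bins drawn uniformly at random (without replacement), then with probability `1 - o(1)` as
`K → ∞` the maximum load is at most `ln ln K / ln M + O(1)`. -/
theorem power_of_M_choices (M : ℕ) (hM : 2 ≤ M) :
    ∃ C : ℝ, Tendsto
      (fun K : ℕ =>
        if hK : M ≤ K then
          letI : Nonempty {s : Finset (Fin K) // s.card = M} :=
            ⟨⟨(Finset.exists_subset_card_eq (s := (Finset.univ : Finset (Fin K))) (n := M)
                (by simpa using hK)).choose,
              (Finset.exists_subset_card_eq (s := (Finset.univ : Finset (Fin K))) (n := M)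
                (by simpa using hK)).choose_spec.2⟩⟩
          ((PMF.uniformOfFintype
              (Fin K → {s : Finset (Fin K) // s.card = M})).toOuterMeasure
            {c | ((Finset.univ.sup
                (loadsProc (by omega)
                  (fun n => c ⟨n % K, Nat.mod_lt n (by omega)⟩) K) : ℕ) : ℝ)
              ≤ Real.log (Real.log K) / Real.log M + C}).toReal
        else 1)
      atTop (nhds 1) := by
  classical
  refine ⟨34, ?_⟩
  have hM0 : 0 < M := by omega
  set e3 : ℝ := 7 * M / 10 - 1 with he3
  have he3pos : 0 < e3 := by
    rw [he3]
    have : (2 : ℝ) ≤ M := by exact_mod_cast hM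
    linarith
  set err : ℕ → ℝ := fun K =>
    8 * (K : ℝ) ^ (-(1/10 : ℝ)) + 4 * (K : ℝ) ^ (-(1/2 : ℝ))
      + 2 ^ M * (K : ℝ) ^ (-e3) with herrdef
  have herr : Filter.Tendsto err Filter.atTop (nhds 0) := by
    have h1 := (rpow_tendsto_zero (show (0:ℝ) < 1/10 by norm_num)).const_mul (8 : ℝ)
    have h2 := (rpow_tendsto_zero (show (0:ℝ) < 1/2 by norm_num)).const_mul (4 : ℝ)
    have h3 := (rpow_tendsto_zero he3pos).const_mul ((2:ℝ) ^ M)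
    have h := (h1.add h2).add h3
    rw [herrdef]
    convert h using 2 <;> norm_num
  have hlb : Filter.Tendsto (fun K => 1 - err K) Filter.atTop (nhds 1) := by
    have := Filter.Tendsto.sub (tendsto_const_nhds (x := (1:ℝ))) herr
    simpa using this
  apply tendsto_of_tendsto_of_tendsto_of_le_of_le' hlb tendsto_const_nhds
  · -- lower bound, eventually
    have hev1 : ∀ᶠ K : ℕ in Filter.atTop, (K : ℝ) ^ (-(9/10 : ℝ)) < 1/32 :=
      (rpow_tendsto_zero (by norm_num)).eventually_lt_const (by norm_num)
    have hev2 : ∀ᶠ K : ℕ in Filter.atTop, 1 ≤ Real.log K :=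
      (Real.tendsto_log_atTop.comp tendsto_natCast_atTop_atTop).eventually_ge_atTop 1
    filter_upwards [Filter.eventually_ge_atTop (2 * M), hev1, hev2]
      with K h2M hεlt hlogK
    have hMK : M ≤ K := by omega
    have hK0 : 0 < K := by omega
    have hKpos : (0:ℝ) < K := by exact_mod_cast hK0
    have hK1 : (1:ℝ) ≤ K := by exact_mod_cast (show 1 ≤ K by omega)
    rw [dif_pos hMK]
    haveI : Nonempty (Om K M) := Om_nonempty hMK
    set ε : ℝ := (K : ℝ) ^ (-(9/10 : ℝ)) with hεdef
    set t : ℝ := (K : ℝ) ^ ((3:ℝ)/10) with htdef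
    have hεpos : 0 < ε := Real.rpow_pos_of_pos hKpos _
    have htpos : 0 < t := Real.rpow_pos_of_pos hKpos _
    have hKε : (K : ℝ) * ε = (K : ℝ) ^ ((1:ℝ)/10) := by
      have h : (K:ℝ) ^ ((1:ℝ) + -(9/10)) = (K:ℝ)^(1:ℝ) * (K:ℝ)^(-(9/10):ℝ) :=
        Real.rpow_add hKpos _ _
      rw [Real.rpow_one] at h
      rw [hεdef, ← h]
      norm_num
    -- the level at which the schedule crosses ε
    set J := Nat.find (exists_xseq_le hM hεpos) with hJdef
    have hJspec : xseq M J ≤ ε := Nat.find_spec (exists_xseq_le hM hεpos)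
    have hJpos : 0 < J := by
      rcases Nat.eq_zero_or_pos J with h0 | h0
      · exfalso
        rw [h0] at hJspec
        have : xseq M 0 = 1/32 := rfl
        rw [this] at hJspec
        linarith
      · exact h0
    set L := J - 1 with hLdef
    have hLsucc : L + 1 = J := by omega
    have hxgt : ε < xseq M L :=
      not_le.mp (Nat.find_min (exists_xseq_le hM hεpos) (by omega))
    have hxle : xseq M (L + 1) ≤ ε := by rw [hLsucc]; exact hJspec
    have hεt : (K:ℝ) * ε ≤ t := by
      rw [hKε, htdef]
      exact Real.rpow_le_rpow_of_exponent_le hK1 (by norm_num)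
    -- the counting bound
    have hmain := main_count (K := K) (M := M) hM0 hK0 hM h2M hεpos L hxgt hxle
      htpos hεt
    -- bound on L
    have hlogM : 0 < Real.log M :=
      Real.log_pos (by exact_mod_cast (show 1 < M by omega))
    have hL34 : ((33 + L : ℕ) : ℝ) ≤ Real.log (Real.log K) / Real.log M + 34 := by
      have hup := xseq_upper hM L
      have h1 : ε < (1/4 : ℝ) ^ (M ^ L) := lt_of_lt_of_le hxgt hup
      have h2 : Real.log ε < Real.log ((1/4 : ℝ) ^ (M ^ L)) :=
        Real.log_lt_log hεpos h1
      rw [hεdef, Real.log_rpow hKpos, Real.log_pow] at h2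
      have hlog4 : Real.log (1/4 : ℝ) = - Real.log 4 := by
        rw [one_div, Real.log_inv]
      rw [hlog4] at h2
      have h4 : (1:ℝ) ≤ Real.log 4 := by
        rw [Real.le_log_iff_exp_le (by norm_num : (0:ℝ) < 4)]
        have := Real.exp_one_lt_d9
        linarith
      have hMLpos : (0:ℝ) ≤ ((M ^ L : ℕ) : ℝ) := by positivity
      have h5 : ((M ^ L : ℕ) : ℝ) < Real.log K := by nlinarith
      have h6 : Real.log ((M:ℝ) ^ L) < Real.log (Real.log K) := by
        apply Real.log_lt_log (by positivity)
        push_cast at h5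
        exact h5
      rw [Real.log_pow] at h6
      have h7 : (L : ℝ) ≤ Real.log (Real.log K) / Real.log M := by
        rw [le_div_iff₀ hlogM]
        exact le_of_lt h6
      push_cast
      linarith
    -- rewrite the measure as a counting fraction
    rw [pmf_unif_toReal]
    set N := Fintype.card (Fin K → Om K M) with hNdef
    have hNpos : (0:ℝ) < N := by
      have : 0 < N := Fintype.card_pos
      exact_mod_cast this
    have hNpow : (N : ℝ) = ((Fintype.card (Om K M) : ℝ)) ^ K := by
      rw [hNdef, Fintype.card_fun, Fintype.card_fin]
      push_cast
      ring
    -- bad set inclusion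
    set p : (Fin K → Om K M) → Prop := fun c =>
      ((Finset.univ.sup (loadsProc (show 0 < M by omega)
          (fun n => c ⟨n % K, Nat.mod_lt n (show 0 < K by omega)⟩) K) : ℕ) : ℝ)
        ≤ Real.log (Real.log K) / Real.log M + 34 with hpdef
    have hsub : Finset.univ.filter (fun c : Fin K → Om K M => ¬ p c)
        ⊆ Finset.univ.filter (fun c : Fin K → Om K M =>
            ∃ k, 34 + L ≤ loadsProc hM0 (ext hK0 c) K k) := by
      intro c hc
      rw [Finset.mem_filter] at hc ⊢
      refine ⟨Finset.mem_univ _, ?_⟩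
      by_contra hnot
      push_neg at hnot
      apply hc.2
      rw [hpdef]
      have hsup : Finset.univ.sup (loadsProc hM0 (ext hK0 c) K) ≤ 33 + L := by
        apply Finset.sup_le
        intro k _
        have := hnot k
        omega
      calc ((Finset.univ.sup (loadsProc (show 0 < M by omega)
            (fun n => c ⟨n % K, Nat.mod_lt n (show 0 < K by omega)⟩) K) : ℕ) : ℝ)
          ≤ ((33 + L : ℕ) : ℝ) := by exact_mod_cast hsup
        _ ≤ Real.log (Real.log K) / Real.log M + 34 := hL34
    have hbadcard : ((Finset.univ.filter (fun c : Fin K → Om K M => ¬ p c)).card : ℝ)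
        ≤ (8 / (K * ε) + 4 * (K * ε) / t^2 + K * (2 * (t / K))^M) * (N : ℝ) := by
      rw [hNpow]
      exact le_trans (by exact_mod_cast Finset.card_le_card hsub) hmain
    -- error term comparison
    have herr' : 8 / ((K:ℝ) * ε) + 4 * ((K:ℝ) * ε) / t^2 + K * (2 * (t / K))^M
        ≤ err K := by
      have hA1 : 8 / ((K:ℝ) * ε) = 8 * (K:ℝ) ^ (-(1/10 : ℝ)) := by
        rw [hKε, Real.rpow_neg (le_of_lt hKpos), div_eq_mul_inv]
      have ht2 : t^2 = (K:ℝ) ^ ((3:ℝ)/5) := by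
        rw [htdef, sq, ← Real.rpow_add hKpos]
        norm_num
      have hA2 : 4 * ((K:ℝ) * ε) / t^2 = 4 * (K:ℝ) ^ (-(1/2 : ℝ)) := by
        rw [hKε, ht2, mul_div_assoc, ← Real.rpow_sub hKpos]
        norm_num
      have hmulK : (K:ℝ) ^ (-(7/10) : ℝ) * (K:ℝ) = (K:ℝ) ^ ((3:ℝ)/10) := by
        have h := Real.rpow_add hKpos (-(7/10)) 1
        rw [Real.rpow_one] at h
        rw [← h]
        norm_num
      have htK : t / (K:ℝ) = (K:ℝ) ^ (-(7/10) : ℝ) := by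
        rw [htdef, ← hmulK]
        exact mul_div_cancel_right₀ _ (ne_of_gt hKpos)
      have hA3 : (K:ℝ) * (2 * (t / K))^M = 2^M * (K:ℝ) ^ (-e3) := by
        rw [mul_pow, htK, ← Real.rpow_natCast ((K:ℝ) ^ (-(7/10):ℝ)) M,
          ← Real.rpow_mul (le_of_lt hKpos)]
        rw [show ((K:ℝ) * (2^M * (K:ℝ) ^ (-(7/10) * (M:ℝ))))
            = 2^M * ((K:ℝ)^(1:ℝ) * (K:ℝ) ^ (-(7/10) * (M:ℝ))) by
          rw [Real.rpow_one]; ring]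
        rw [← Real.rpow_add hKpos]
        rw [he3]
        norm_num
        ring_nf
      rw [hA1, hA2, hA3, herrdef]
    -- conclude
    have hsplitc : (Finset.univ.filter p).card
        + (Finset.univ.filter (fun c => ¬ p c)).card = N := by
      rw [Finset.card_filter_add_card_filter_not, Finset.card_univ]
    rw [le_div_iff₀ hNpos]
    have h1 : ((Finset.univ.filter p).card : ℝ)
        = (N : ℝ) - ((Finset.univ.filter (fun c => ¬ p c)).card : ℝ) := by
      have := hsplitc
      push_cast [← this]
      ring
    rw [h1]
    have herrN : (8 / ((K:ℝ) * ε) + 4 * ((K:ℝ) * ε) / t^2 + K * (2 * (t / K))^M)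
        * (N:ℝ) ≤ err K * N :=
      mul_le_mul_of_nonneg_right herr' (le_of_lt hNpos)
    linarith [hbadcard, herrN, hNpos]
  · -- upper bound by 1, always
    apply Filter.Eventually.of_forall
    intro K
    split
    case isTrue hMK =>
      haveI : Nonempty (Om K M) := Om_nonempty hMK
      rw [pmf_unif_toReal]
      apply div_le_one_of_le₀
      · exact_mod_cast Finset.card_le_card (Finset.subset_univ _)
      · positivity
    case isFalse => exact le_refl _
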